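/- arXiv:2206.12496 — 3 statements merged into one kernel-verified Lean document; each statement's English description precedes it below -/
import Mathlib

section
/- Let V be a type and let A, P : V → V → Prop be two edge relations on V ("artificial" and "physical" directed edges). Define the transformed (split-node) graph on the vertex set V × Bool as follows: for every physical edge (u,v) with P u v, a physical edge from (u, true) to (v, true) and a physical edge from (u, false) to (v, true); for every artificial edge (u,v) with A u v, an artificial edge from (u, true) to (v, false); and no other edges. Then for every directed walk in the original graph, given by vertices v₀, v₁, …, vₙ with edge labels ℓ₁, …, ℓₙ ∈ {artificial, physical} (where ℓᵢ = artificial implies A vᵢ₋₁ vᵢ and ℓᵢ = physical implies P vᵢ₋₁ vᵢ), such that no two consecutive labels are both artificial, there exists a directed walk in the transformed graph starting at (v₀, true), with the same length n and the same sequence of edge labels, whose i-th vertex has first component equal to vᵢ for every 0 ≤ i ≤ n. -/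
/-- Lemma 2 (abstract form): for every directed walk `v 0, …, v n` in the original
graph with labels `ℓ` (`ℓ i = true` means the `i`-th edge is artificial, requiring
`A (v i) (v (i+1))`; `ℓ i = false` means physical, requiring `P (v i) (v (i+1))`)
that contains no two consecutive artificial edges, there is a directed walk of the
same length and the same edge labels in the split-node transformed graph on
`V × Bool`, starting at `(v 0, true)`, whose `i`-th vertex projects to `v i`. -/
theorem original_walk_lifts_to_transformed
    {V : Type*} (A P : V → V → Prop)
    (n : ℕ) (v : ℕ → V) (ℓ : ℕ → Bool)
    (hvalid : ∀ i < n,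
      (ℓ i = true → A (v i) (v (i + 1))) ∧
      (ℓ i = false → P (v i) (v (i + 1))))
    (hnoconsec : ∀ i, i + 1 < n → ¬(ℓ i = true ∧ ℓ (i + 1) = true)) :
    ∃ w : ℕ → V × Bool,
      w 0 = (v 0, true) ∧
      (∀ i ≤ n, (w i).1 = v i) ∧
      (∀ i < n,
        (ℓ i = true →
          A (w i).1 (w (i + 1)).1 ∧ (w i).2 = true ∧ (w (i + 1)).2 = false) ∧
        (ℓ i = false →
          P (w i).1 (w (i + 1)).1 ∧ (w (i + 1)).2 = true)) := by
  refine ⟨fun i => (v i, match i with | 0 => true | j + 1 => !ℓ j), rfl, fun i _ => rfl, ?_⟩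
  intro i hi
  constructor
  · intro hl
    refine ⟨(hvalid i hi).1 hl, ?_, by simp [hl]⟩
    match i with
    | 0 => rfl
    | j + 1 =>
      have := hnoconsec j hi
      simp only [hl, and_true] at this
      simp [this]
  · intro hl
    exact ⟨(hvalid i hi).2 hl, by simp [hl]⟩
end

section
/- Let V be a type and let A, P : V → V → Prop be the artificial and physical edge relations, and let c : V → V → ℝ be an edge cost function. Define the transformed (split-node) graph on V × Bool as follows: for every physical edge (u,v) with P u v, a physical edge from (u, true) to (v, true) and a physical edge from (u, false) to (v, true); for every artificial edge (u,v) with A u v, an artificial edge from (u, true) to (v, false); and no other edges; every edge of the transformed graph derived from an edge (u,v) of the original graph has cost c u v. Fix an origin o ∈ V and a destination d ∈ V. Then the set of costs of directed walks in the transformed graph from (o, true) to some copy of d (i.e., to (d, true) or (d, false)) equals the set of costs of directed walks in the original graph from o to d that satisfy the no-consecutive-artificial-link constraint, where the cost of a walk is the sum of the costs of its edges. In particular, a minimum-cost walk in the transformed graph from (o, true) to a copy of d exists if and only if a minimum-cost constrained walk from o to d in the original graph exists, and the two minimum costs are equal. -/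
open Finset

/-- Costs of directed walks in the split-node transformed graph on `V × Bool`
from `(o, true)` to some copy of `d`. -/
def transformedWalkCosts {V : Type*} (A P : V → V → Prop) (c : V → V → ℝ)
    (o d : V) : Set ℝ :=
  {x : ℝ | ∃ (n : ℕ) (w : ℕ → V × Bool) (ℓ : ℕ → Bool),
    w 0 = (o, true) ∧ (w n).1 = d ∧
    (∀ i < n,
      (ℓ i = true →
        A (w i).1 (w (i + 1)).1 ∧ (w i).2 = true ∧ (w (i + 1)).2 = false) ∧
      (ℓ i = false →
        P (w i).1 (w (i + 1)).1 ∧ (w (i + 1)).2 = true)) ∧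
    x = ∑ i ∈ Finset.range n, c (w i).1 (w (i + 1)).1}

/-- Costs of directed walks in the original graph from `o` to `d` satisfying the
no-consecutive-artificial-link constraint. -/
def constrainedWalkCosts {V : Type*} (A P : V → V → Prop) (c : V → V → ℝ)
    (o d : V) : Set ℝ :=
  {x : ℝ | ∃ (n : ℕ) (v : ℕ → V) (ℓ : ℕ → Bool),
    v 0 = o ∧ v n = d ∧
    (∀ i < n,
      (ℓ i = true → A (v i) (v (i + 1))) ∧
      (ℓ i = false → P (v i) (v (i + 1)))) ∧
    (∀ i, i + 1 < n → ¬(ℓ i = true ∧ ℓ (i + 1) = true)) ∧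
    x = ∑ i ∈ Finset.range n, c (v i) (v (i + 1))}

/-- Solving the unconstrained shortest path problem on the transformed network solves
the constrained (no two consecutive artificial links) shortest path problem on the
original network: the sets of achievable walk costs coincide, and hence minimum-cost
walks exist in one iff they exist in the other, with equal minimum costs. -/
theorem transformed_solves_constrained_shortest_path
    {V : Type*} (A P : V → V → Prop) (c : V → V → ℝ) (o d : V) :
    transformedWalkCosts A P c o d = constrainedWalkCosts A P c o d ∧
    ∀ m : ℝ, IsLeast (transformedWalkCosts A P c o d) m ↔
      IsLeast (constrainedWalkCosts A P c o d) m := by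
  have heq : transformedWalkCosts A P c o d = constrainedWalkCosts A P c o d := by
    ext x
    constructor
    · rintro ⟨n, w, ℓ, h0, hd, hstep, hx⟩
      refine ⟨n, fun i => (w i).1, ℓ, by simp [h0], hd, ?_, ?_, hx⟩
      · intro i hi
        exact ⟨fun h => ((hstep i hi).1 h).1, fun h => ((hstep i hi).2 h).1⟩
      · rintro i hi ⟨hA, hA'⟩
        have h1 := ((hstep i (by omega)).1 hA).2.2
        have h2 := ((hstep (i + 1) hi).1 hA').2.1
        rw [h1] at h2
        exact Bool.false_ne_true h2
    · rintro ⟨n, v, ℓ, h0, hd, hstep, hcons, hx⟩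
      refine ⟨n, fun i => (v i, Nat.rec true (fun j _ => !ℓ j) i), ℓ,
        by simp [h0], hd, ?_, hx⟩
      intro i hi
      constructor
      · intro h
        refine ⟨(hstep i hi).1 h, ?_, by simp [h]⟩
        cases i with
        | zero => rfl
        | succ j =>
          have hj : ℓ j = false := by
            have := hcons j (by omega)
            cases hℓ : ℓ j
            · rfl
            · exact absurd ⟨hℓ, h⟩ this
          simp [hj]
      · intro h
        exact ⟨(hstep i hi).2 h, by simp [h]⟩
  refine ⟨heq, fun m => by rw [heq]⟩
end

section
/- Let V be a finite type of nodes and S ⊆ V a vertex subset. Let R be a finite index set of OD pairs with origin o(r), destination s(r), and demand d(r) ≥ 0, and for each r ∈ R a finite nonempty set Π(r) of directed walks from o(r) to s(r), with nonnegative path flows h(π) ≥ 0 satisfying, for every r, that the sum of h(π) over π ∈ Π(r) equals d(r). Suppose that every path π with h(π) > 0 contains at most one cut step, i.e., at most one consecutive pair of vertices lying on opposite sides of S. Then the interflow equals the interdemand; that is, ψ = interflow − interdemand = 0. -/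
open Finset

lemma parity_cut (f : ℕ → Prop) [DecidablePred f] (n : ℕ) :
    ((Finset.range n).filter
      (fun i => (f i ∧ ¬ f (i+1)) ∨ (¬ f i ∧ f (i+1)))).card % 2
    = if (f 0 ∧ ¬ f n) ∨ (¬ f 0 ∧ f n) then 1 else 0 := by
  induction n with
  | zero => simp
  | succ n ih =>
    rw [Finset.range_add_one, Finset.filter_insert]
    by_cases hfn : (f n ∧ ¬ f (n+1)) ∨ (¬ f n ∧ f (n+1))
    · rw [if_pos hfn, Finset.card_insert_of_notMem (by simp)]
      by_cases h0 : f 0 <;> by_cases hn : f n <;> by_cases hn1 : f (n+1) <;>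
        simp [h0, hn, hn1] at * <;> omega
    · rw [if_neg hfn]
      by_cases h0 : f 0 <;> by_cases hn : f n <;> by_cases hn1 : f (n+1) <;>
        simp [h0, hn, hn1] at * <;> omega

/-- If every used path (one with positive flow) contains at most one cut step with
respect to the vertex set `S`, then the interflow equals the interdemand;
i.e. `ψ = interflow − interdemand = 0`. -/
theorem interflow_eq_interdemand_of_at_most_one_cut
    {V : Type*} [Fintype V] (S : Set V) [DecidablePred (· ∈ S)]
    {R : Type*} [Fintype R] (o s : R → V) (d : R → ℝ) (hd : ∀ r, 0 ≤ d r)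
    (P : R → Type*) [∀ r, Fintype (P r)] [∀ r, Nonempty (P r)]
    (len : ∀ r, P r → ℕ) (vtx : ∀ r, P r → ℕ → V)
    (hstart : ∀ r p, vtx r p 0 = o r)
    (hend : ∀ r p, vtx r p (len r p) = s r)
    (h : ∀ r, P r → ℝ) (hpos : ∀ r p, 0 ≤ h r p)
    (hdem : ∀ r, ∑ p, h r p = d r)
    (hcut : ∀ r p, 0 < h r p →
      ((Finset.range (len r p)).filter
        (fun i => (vtx r p i ∈ S ∧ vtx r p (i + 1) ∉ S) ∨
          (vtx r p i ∉ S ∧ vtx r p (i + 1) ∈ S))).card ≤ 1) :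
    (∑ r, ∑ p, (((Finset.range (len r p)).filter
        (fun i => vtx r p i ∈ S ∧ vtx r p (i + 1) ∉ S)).card : ℝ) * h r p) +
    (∑ r, ∑ p, (((Finset.range (len r p)).filter
        (fun i => vtx r p i ∉ S ∧ vtx r p (i + 1) ∈ S)).card : ℝ) * h r p) =
    ∑ r, if (o r ∈ S ∧ s r ∉ S) ∨ (o r ∉ S ∧ s r ∈ S) then d r else 0 := by
  rw [← Finset.sum_add_distrib]
  refine Finset.sum_congr rfl fun r _ => ?_
  rw [← Finset.sum_add_distrib]
  have key : ∀ p : P r,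
      (((Finset.range (len r p)).filter
        (fun i => vtx r p i ∈ S ∧ vtx r p (i + 1) ∉ S)).card : ℝ) * h r p +
      (((Finset.range (len r p)).filter
        (fun i => vtx r p i ∉ S ∧ vtx r p (i + 1) ∈ S)).card : ℝ) * h r p =
      (if (o r ∈ S ∧ s r ∉ S) ∨ (o r ∉ S ∧ s r ∈ S) then (1:ℝ) else 0) * h r p := by
    intro p
    rcases lt_or_eq_of_le (hpos r p) with hp | hp
    · -- h r p > 0
      have hsum : ((Finset.range (len r p)).filter
            (fun i => vtx r p i ∈ S ∧ vtx r p (i + 1) ∉ S)).card +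
          ((Finset.range (len r p)).filter
            (fun i => vtx r p i ∉ S ∧ vtx r p (i + 1) ∈ S)).card =
          ((Finset.range (len r p)).filter
            (fun i => (vtx r p i ∈ S ∧ vtx r p (i + 1) ∉ S) ∨
              (vtx r p i ∉ S ∧ vtx r p (i + 1) ∈ S))).card := by
        rw [Finset.filter_or]
        rw [Finset.card_union_of_disjoint]
        rw [Finset.disjoint_left]
        intro i hi1 hi2
        simp only [Finset.mem_filter] at hi1 hi2
        exact hi2.2.1 hi1.2.1
      have hpar := parity_cut (fun i => vtx r p i ∈ S) (len r p)
      simp only [hstart r p, hend r p] at hpar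
      have hle := hcut r p hp
      set a := ((Finset.range (len r p)).filter
            (fun i => vtx r p i ∈ S ∧ vtx r p (i + 1) ∉ S)).card
      set b := ((Finset.range (len r p)).filter
            (fun i => vtx r p i ∉ S ∧ vtx r p (i + 1) ∈ S)).card
      have : (a : ℝ) + (b : ℝ) =
          (if (o r ∈ S ∧ s r ∉ S) ∨ (o r ∉ S ∧ s r ∈ S) then (1:ℝ) else 0) := by
        by_cases hc : (o r ∈ S ∧ s r ∉ S) ∨ (o r ∉ S ∧ s r ∈ S)
        · rw [if_pos hc] at hpar ⊢
          rw [← hsum] at hpar hle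
          have : a + b = 1 := by omega
          exact_mod_cast this
        · rw [if_neg hc] at hpar ⊢
          rw [← hsum] at hpar hle
          have : a + b = 0 := by omega
          exact_mod_cast this
      rw [← add_mul, this]
    · rw [← hp]; ring
  rw [Finset.sum_congr rfl fun p _ => key p, ← Finset.mul_sum, hdem]
  by_cases hc : (o r ∈ S ∧ s r ∉ S) ∨ (o r ∉ S ∧ s r ∈ S) <;> simp [hc]
end
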